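/- arXiv:2008.01029 — 6 statements merged into one kernel-verified Lean document; each statement's English description precedes it below -/
import Mathlib

section
/- Let A be a finite type, η0 a design on A, τ̂ : A → ℝ an estimator, τ ∈ ℝ the estimand, 0 < α < 1/2, and w : A → Ω a function. For each υ ∈ Ω with P_{η0}({z : w(z) = υ}) > 0, let η_υ denote the conditional design of η0 given w = υ, and suppose reals U_υ, L_υ satisfy the quantile conditions P_{η_υ}({z : τ̂(z) − τ > U_υ}) ≤ α and P_{η_υ}({z : τ̂(z) − τ < L_υ}) ≤ α. Then the oracle procedure built with the conditional design map H(z) = η_{w(z)} is η0-valid: P_{η0}({z : τ̂(z) − U_{w(z)} ≤ τ and τ ≤ τ̂(z) − L_{w(z)}}) ≥ 1 − 2α. (Paper's Theorem 1.) -/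
open scoped Classical

/-- The conditional design of `η0` given `w = υ`:
`η_υ(z) = η0(z) / P_{η0}(w = υ)` if `w z = υ`, and `0` otherwise. -/
noncomputable def condDesign {A : Type*} {Ω : Type*} [Fintype A]
    (η0 : A → ℝ) (w : A → Ω) (υ : Ω) (z : A) : ℝ :=
  if w z = υ then η0 z / (∑ z', if w z' = υ then η0 z' else 0) else 0

/-- Paper's Theorem 1: the oracle procedure built with the conditional design
map `H(z) = η_{w(z)}` is `η0`-valid. -/
theorem conditional_as_if_valid {A : Type*} {Ω : Type*} [Fintype A]
    (η0 : A → ℝ) (hη0 : ∀ z, 0 ≤ η0 z) (hsum : ∑ z, η0 z = 1)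
    (tauhat : A → ℝ) (τ : ℝ) (α : ℝ) (hα0 : 0 < α) (hα1 : α < 1 / 2)
    (w : A → Ω) (U L : Ω → ℝ)
    (hU : ∀ υ : Ω, 0 < (∑ z, if w z = υ then η0 z else 0) →
      (∑ z, if tauhat z - τ > U υ then condDesign η0 w υ z else 0) ≤ α)
    (hL : ∀ υ : Ω, 0 < (∑ z, if w z = υ then η0 z else 0) →
      (∑ z, if tauhat z - τ < L υ then condDesign η0 w υ z else 0) ≤ α) :
    1 - 2 * α ≤
      ∑ z, if tauhat z - U (w z) ≤ τ ∧ τ ≤ tauhat z - L (w z) then η0 z else 0 := by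
  set S : Ω → ℝ := fun υ => ∑ z, if w z = υ then η0 z else 0 with hSdef
  have hSnonneg : ∀ υ, 0 ≤ S υ := by
    intro υ
    apply Finset.sum_nonneg
    intro z _
    split_ifs
    · exact hη0 z
    · exact le_refl 0
  -- fiberwise decomposition of any sum of the form `∑ z, if p (w z) z then η0 z else 0`
  have fiber : ∀ (f : A → ℝ),
      (∑ υ ∈ Finset.univ.image w, ∑ z ∈ Finset.univ.filter (fun z => w z = υ), f z)
        = ∑ z, f z := by
    intro f
    exact Finset.sum_fiberwise_of_maps_to (fun z _ => Finset.mem_image_of_mem w (Finset.mem_univ z)) f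
  have hStotal : ∑ υ ∈ Finset.univ.image w, S υ = 1 := by
    have := fiber η0
    rw [hsum] at this
    rw [← this]
    apply Finset.sum_congr rfl
    intro υ _
    rw [hSdef]
    simp [Finset.sum_filter]
  -- key lemma
  have key : ∀ (p : Ω → A → Prop),
      (∀ υ, 0 < S υ → (∑ z, if p υ z then condDesign η0 w υ z else 0) ≤ α) →
      (∑ z, if p (w z) z then η0 z else 0) ≤ α := by
    intro p hp
    rw [← fiber (fun z => if p (w z) z then η0 z else 0)]
    have fib_eq : ∀ υ, (∑ z ∈ Finset.univ.filter (fun z => w z = υ),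
        (if p (w z) z then η0 z else 0))
        = ∑ z, if w z = υ ∧ p υ z then η0 z else 0 := by
      intro υ
      rw [Finset.sum_filter]
      apply Finset.sum_congr rfl
      intro z _
      by_cases hw : w z = υ
      · subst hw; simp
      · simp [hw]
    have bound : ∀ υ ∈ Finset.univ.image w,
        (∑ z ∈ Finset.univ.filter (fun z => w z = υ),
          (if p (w z) z then η0 z else 0)) ≤ α * S υ := by
      intro υ _
      rw [fib_eq υ]
      rcases lt_or_eq_of_le (hSnonneg υ) with hpos | hzero
      · have hq := hp υ hpos
        have heq : (∑ z, if w z = υ ∧ p υ z then η0 z else 0)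
            = S υ * ∑ z, if p υ z then condDesign η0 w υ z else 0 := by
          rw [Finset.mul_sum]
          apply Finset.sum_congr rfl
          intro z _
          unfold condDesign
          have hS : (∑ z', if w z' = υ then η0 z' else 0) = S υ := rfl
          rw [hS]
          by_cases h1 : p υ z <;> by_cases h2 : w z = υ <;>
            simp [h1, h2, mul_div_cancel₀, ne_of_gt hpos, mul_comm,
              div_mul_cancel₀]
        rw [heq, mul_comm]
        exact mul_le_mul_of_nonneg_right hq (le_of_lt hpos) |>.trans_eq (mul_comm _ _) |>.trans_eq (mul_comm _ _)
      · -- S υ = 0 : every η0 z with w z = υ is zero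
        have hz : ∀ z, w z = υ → η0 z = 0 := by
          intro z hwz
          have h0 : (∑ z, if w z = υ then η0 z else 0) = 0 := hzero.symm
          have := (Finset.sum_eq_zero_iff_of_nonneg (by
            intro x _
            split_ifs
            · exact hη0 x
            · exact le_refl 0)).mp h0 z (Finset.mem_univ z)
          simpa [hwz] using this
        have : (∑ z, if w z = υ ∧ p υ z then η0 z else 0) = 0 := by
          apply Finset.sum_eq_zero
          intro z _
          split_ifs with h
          · exact hz z h.1
          · rfl
        rw [this, ← hzero, mul_zero]
    calc (∑ υ ∈ Finset.univ.image w, ∑ z ∈ Finset.univ.filter (fun z => w z = υ),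
            (if p (w z) z then η0 z else 0))
        ≤ ∑ υ ∈ Finset.univ.image w, α * S υ := Finset.sum_le_sum bound
      _ = α * ∑ υ ∈ Finset.univ.image w, S υ := by rw [Finset.mul_sum]
      _ = α := by rw [hStotal, mul_one]
  -- apply key to both tails
  have hUb : (∑ z, if tauhat z - τ > U (w z) then η0 z else 0) ≤ α :=
    key (fun υ z => tauhat z - τ > U υ) hU
  have hLb : (∑ z, if tauhat z - τ < L (w z) then η0 z else 0) ≤ α :=
    key (fun υ z => tauhat z - τ < L υ) hL
  -- complement
  have hsplit : (∑ z, if tauhat z - U (w z) ≤ τ ∧ τ ≤ tauhat z - L (w z) then η0 z else 0)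
      + (∑ z, if ¬ (tauhat z - U (w z) ≤ τ ∧ τ ≤ tauhat z - L (w z)) then η0 z else 0) = 1 := by
    rw [← Finset.sum_add_distrib, ← hsum]
    apply Finset.sum_congr rfl
    intro z _
    split_ifs with h <;> simp
  have hbad : (∑ z, if ¬ (tauhat z - U (w z) ≤ τ ∧ τ ≤ tauhat z - L (w z)) then η0 z else 0)
      ≤ (∑ z, if tauhat z - τ > U (w z) then η0 z else 0)
        + (∑ z, if tauhat z - τ < L (w z) then η0 z else 0) := by
    rw [← Finset.sum_add_distrib]
    apply Finset.sum_le_sum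
    intro z _
    by_cases h : tauhat z - U (w z) ≤ τ ∧ τ ≤ tauhat z - L (w z)
    · rw [if_neg (not_not_intro h)]
      split_ifs <;> linarith [hη0 z]
    · rw [if_pos h]
      rcases not_and_or.mp h with h' | h' <;> push_neg at h' <;> split_ifs <;>
        linarith [hη0 z]
  linarith
end

section
/- Let A be a finite type, η0 a design on A, τ̂ : A → ℝ an estimator, τ ∈ ℝ, and 0 < α < 1/2. Let {A_1, …, A_K} be a partition of the support {z : η0(z) > 0} of η0 into pairwise disjoint nonempty sets, and for each k let η_k be the design obtained by restricting η0 to A_k and renormalizing. Suppose for each k there are reals U_k, L_k with P_{η_k}({z : τ̂(z) − τ > U_k}) ≤ α and P_{η_k}({z : τ̂(z) − τ < L_k}) ≤ α. Then the procedure that, at assignment z, uses the interval [τ̂(z) − U_{k(z)}, τ̂(z) − L_{k(z)}] where k(z) is the index of the partition element containing z, is η0-valid: P_{η0}({z : τ̂(z) − U_{k(z)} ≤ τ and τ ≤ τ̂(z) − L_{k(z)}}) ≥ 1 − 2α. (Paper's Corollary 1.) -/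
open scoped Classical

/-- The design obtained by restricting `η0` to the set `B` and renormalizing. -/
noncomputable def restrictDesign {A : Type*} [Fintype A]
    (η0 : A → ℝ) (B : Set A) (z : A) : ℝ :=
  if z ∈ B then η0 z / (∑ z', if z' ∈ B then η0 z' else 0) else 0

/-- Auxiliary: a tail bound for the restricted design rescales to a bound for `η0` on `B`. -/
lemma restrict_tail_bound {A : Type*} [Fintype A] (η0 : A → ℝ) (B : Set A) (c : A → Prop)
    (hp : 0 < ∑ z, if z ∈ B then η0 z else 0) (α : ℝ)
    (h : (∑ z, if c z then restrictDesign η0 B z else 0) ≤ α) :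
    (∑ z, if z ∈ B ∧ c z then η0 z else 0) ≤ α * (∑ z, if z ∈ B then η0 z else 0) := by
  have heq : (∑ z, if c z then restrictDesign η0 B z else 0)
      = (∑ z, if z ∈ B ∧ c z then η0 z else 0) / (∑ z, if z ∈ B then η0 z else 0) := by
    rw [Finset.sum_div]
    refine Finset.sum_congr rfl fun z _ => ?_
    unfold restrictDesign
    by_cases hc : c z
    · by_cases hb : z ∈ B
      · rw [if_pos hc, if_pos hb, if_pos ⟨hb, hc⟩]
      · rw [if_pos hc, if_neg hb, if_neg (fun h => hb h.1), zero_div]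
    · rw [if_neg hc, if_neg (fun h => hc h.2), zero_div]
  rw [heq, div_le_iff₀ hp] at h
  exact h

/-- Paper's Corollary 1: any partition of the support of `η0` induces an
`η0`-valid oracle confidence procedure, built by restricting `η0` to the
element of the partition containing the observed assignment. -/
theorem partition_as_if_valid {A : Type*} [Fintype A] {K : ℕ}
    (η0 : A → ℝ) (hη0 : ∀ z, 0 ≤ η0 z) (hsum : ∑ z, η0 z = 1)
    (tauhat : A → ℝ) (τ : ℝ) (α : ℝ) (hα0 : 0 < α) (hα1 : α < 1 / 2)
    (part : Fin K → Set A)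
    (hdisj : ∀ k k' : Fin K, k ≠ k' → Disjoint (part k) (part k'))
    (hne : ∀ k : Fin K, (part k).Nonempty)
    (hcover : (⋃ k, part k) = {z | 0 < η0 z})
    (kidx : A → Fin K) (hkidx : ∀ z, 0 < η0 z → z ∈ part (kidx z))
    (U L : Fin K → ℝ)
    (hU : ∀ k : Fin K,
      (∑ z, if tauhat z - τ > U k then restrictDesign η0 (part k) z else 0) ≤ α)
    (hL : ∀ k : Fin K,
      (∑ z, if tauhat z - τ < L k then restrictDesign η0 (part k) z else 0) ≤ α) :
    1 - 2 * α ≤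
      ∑ z, if tauhat z - U (kidx z) ≤ τ ∧ τ ≤ tauhat z - L (kidx z)
        then η0 z else 0 := by
  classical
  have hnn : ∀ (z : A) (P : Prop) [Decidable P], 0 ≤ if P then η0 z else 0 := by
    intro z P _
    split_ifs
    · exact hη0 z
    · exact le_refl 0
  have hsupp : ∀ k (z : A), z ∈ part k → 0 < η0 z := by
    intro k z hz
    have hmem : z ∈ ⋃ k, part k := Set.mem_iUnion.2 ⟨k, hz⟩
    rw [hcover] at hmem
    exact hmem
  -- mass of each partition piece
  have hppos : ∀ k, 0 < ∑ z, if z ∈ part k then η0 z else 0 := by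
    intro k
    obtain ⟨z0, hz0⟩ := hne k
    refine Finset.sum_pos' (fun z _ => hnn z _) ⟨z0, Finset.mem_univ z0, ?_⟩
    rw [if_pos hz0]
    exact hsupp k z0 hz0
  -- total mass of the pieces is 1
  have hpsum : (∑ k, ∑ z, if z ∈ part k then η0 z else 0) = 1 := by
    rw [Finset.sum_comm]
    rw [show (∑ z, ∑ k, if z ∈ part k then η0 z else 0) = ∑ z, η0 z from ?_, hsum]
    refine Finset.sum_congr rfl fun z _ => ?_
    by_cases hz : 0 < η0 z
    · have hm := hkidx z hz
      rw [Finset.sum_eq_single (kidx z)]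
      · rw [if_pos hm]
      · intro k _ hk
        rw [if_neg]
        intro hzk
        exact Set.disjoint_left.mp (hdisj k (kidx z) hk) hzk hm
      · intro h
        exact absurd (Finset.mem_univ _) h
    · have hz0 : η0 z = 0 := le_antisymm (not_lt.1 hz) (hη0 z)
      simp [hz0]
  -- pointwise: a "tail" indicator at kidx z is dominated by the sum over all pieces
  have pointwise : ∀ (c : Fin K → A → Prop) (z : A),
      (if c (kidx z) z then η0 z else 0) ≤ ∑ k, if z ∈ part k ∧ c k z then η0 z else 0 := by
    intro c z
    by_cases hz : 0 < η0 z
    · have hm := hkidx z hz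
      by_cases hc : c (kidx z) z
      · rw [if_pos hc]
        have hle := Finset.single_le_sum
          (f := fun k => if z ∈ part k ∧ c k z then η0 z else 0)
          (fun k _ => hnn z _) (Finset.mem_univ (kidx z))
        simpa [hm, hc] using hle
      · rw [if_neg hc]
        exact Finset.sum_nonneg fun k _ => hnn z _
    · have hz0 : η0 z = 0 := le_antisymm (not_lt.1 hz) (hη0 z)
      simp [hz0]
  -- total tail bound
  have tail : ∀ (c : Fin K → A → Prop),
      (∀ k, (∑ z, if z ∈ part k ∧ c k z then η0 z else 0)
          ≤ α * ∑ z, if z ∈ part k then η0 z else 0) →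
      (∑ z, if c (kidx z) z then η0 z else 0) ≤ α := by
    intro c hc
    calc (∑ z, if c (kidx z) z then η0 z else 0)
        ≤ ∑ z, ∑ k, if z ∈ part k ∧ c k z then η0 z else 0 :=
          Finset.sum_le_sum fun z _ => pointwise c z
      _ = ∑ k, ∑ z, if z ∈ part k ∧ c k z then η0 z else 0 := Finset.sum_comm
      _ ≤ ∑ k, α * ∑ z, if z ∈ part k then η0 z else 0 :=
          Finset.sum_le_sum fun k _ => hc k
      _ = α * ∑ k, ∑ z, if z ∈ part k then η0 z else 0 := by rw [Finset.mul_sum]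
      _ = α := by rw [hpsum, mul_one]
  have hH : (∑ z, if tauhat z - τ > U (kidx z) then η0 z else 0) ≤ α :=
    tail (fun k z => tauhat z - τ > U k) fun k =>
      restrict_tail_bound η0 (part k) _ (hppos k) α (hU k)
  have hLo : (∑ z, if tauhat z - τ < L (kidx z) then η0 z else 0) ≤ α :=
    tail (fun k z => tauhat z - τ < L k) fun k =>
      restrict_tail_bound η0 (part k) _ (hppos k) α (hL k)
  have hsplit : (∑ z, η0 z) ≤
      (∑ z, if tauhat z - U (kidx z) ≤ τ ∧ τ ≤ tauhat z - L (kidx z) then η0 z else 0)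
      + (∑ z, if tauhat z - τ > U (kidx z) then η0 z else 0)
      + (∑ z, if tauhat z - τ < L (kidx z) then η0 z else 0) := by
    rw [← Finset.sum_add_distrib, ← Finset.sum_add_distrib]
    refine Finset.sum_le_sum fun z _ => ?_
    by_cases h1 : tauhat z - U (kidx z) ≤ τ ∧ τ ≤ tauhat z - L (kidx z)
    · rw [if_pos h1]
      have h2 := hnn z (tauhat z - τ > U (kidx z))
      have h3 := hnn z (tauhat z - τ < L (kidx z))
      linarith
    · rw [if_neg h1, not_and_or, not_le, not_le] at *
      rcases h1 with h | h
      · rw [if_pos (show tauhat z - τ > U (kidx z) by linarith)]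
        have h3 := hnn z (tauhat z - τ < L (kidx z))
        linarith
      · rw [if_pos (show tauhat z - τ < L (kidx z) by linarith)]
        have h2 := hnn z (tauhat z - τ > U (kidx z))
        linarith
  rw [hsum] at hsplit
  linarith
end

section
/- Let A and Ω be finite (or countable) types, η0 a design on A, and m a Markov kernel assigning to each z ∈ A a probability mass function m(·|z) on Ω; consider the joint distribution P(z, w) = η0(z) m(w|z) on A × Ω. For each w ∈ Ω with positive marginal probability p(w) = Σ_z η0(z) m(w|z) > 0, define the conditional design η_w(z) = η0(z) m(w|z) / p(w). Let τ̂ : A → ℝ, τ ∈ ℝ, 0 < α < 1/2, and suppose for each such w there are reals U_w, L_w with P_{η_w}({z : τ̂(z) − τ > U_w}) ≤ α and P_{η_w}({z : τ̂(z) − τ < L_w}) ≤ α. Then the stochastic oracle procedure is η0-valid: the joint probability P({(z, w) : τ̂(z) − U_w ≤ τ and τ ≤ τ̂(z) − L_w}) ≥ 1 − 2α. (Paper's Theorem 2 on stochastic conditional design maps.) -/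
/-!
Conditioning on the auxiliary draw `w`, the oracle interval misses `τ` only on the event
`τ̂ - τ > U_w` or on the event `τ̂ - τ < L_w`, each of conditional probability at most `α`.
Multiplying by `p(w)` and summing over `w` (law of total probability) bounds the joint
probability of each event by `α`, and a union bound gives coverage at least `1 - 2α`.
Draws with `p(w) = 0` carry no joint mass.
-/

open scoped Classical

/-- The conditional design of `η0` given the auxiliary draw `w` from the
Markov kernel `m`: `η_w(z) = η0(z) m(w|z) / p(w)`. -/
noncomputable def stochCondDesign {A : Type*} {Ω : Type*} [Fintype A]
    (η0 : A → ℝ) (m : A → Ω → ℝ) (w : Ω) (z : A) : ℝ :=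
  η0 z * m z w / (∑ z', η0 z' * m z' w)

section

variable {A Ω : Type*} [Fintype A] [Fintype Ω]

theorem sum_ite_le_mul_sum_of_sum_ite_div_le {f : A → ℝ} (hf : ∀ z, 0 ≤ f z) (P : A → Prop)
    [DecidablePred P] {α : ℝ}
    (h : 0 < ∑ z, f z → (∑ z, if P z then f z / ∑ z', f z' else 0) ≤ α) :
    (∑ z, if P z then f z else 0) ≤ α * ∑ z, f z := by
  have hle : (∑ z, if P z then f z else 0) ≤ ∑ z, f z := by
    rw [← Finset.sum_filter]
    exact Finset.sum_le_sum_of_subset_of_nonneg (Finset.filter_subset _ _) fun z _ _ => hf z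
  rcases (Finset.sum_nonneg fun z _ => hf z).eq_or_lt with hzero | hpos
  · rw [← hzero] at hle ⊢
    simpa using hle
  · have hdiv : (∑ z, if P z then f z / ∑ z', f z' else 0)
        = (∑ z, if P z then f z else 0) / ∑ z, f z := by
      simp only [Finset.sum_div, ite_div, zero_div]
    rw [hdiv, div_le_iff₀ hpos] at h
    exact h hpos

theorem sum_sum_ite_le_mul_of_conditional_le {q : A → Ω → ℝ} (hq : ∀ z w, 0 ≤ q z w)
    (P : A → Ω → Prop) [∀ z w, Decidable (P z w)] {α : ℝ}
    (h : ∀ w, 0 < ∑ z, q z w → (∑ z, if P z w then q z w / ∑ z', q z' w else 0) ≤ α) :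
    (∑ z, ∑ w, if P z w then q z w else 0) ≤ α * ∑ z, ∑ w, q z w := by
  rw [Finset.sum_comm, Finset.sum_comm (f := q), Finset.mul_sum]
  exact Finset.sum_le_sum fun w _ =>
    sum_ite_le_mul_sum_of_sum_ite_div_le (fun z => hq z w) (P · w) (h w)

theorem sum_sum_mul_eq_one {η0 : A → ℝ} (hsum : ∑ z, η0 z = 1) {m : A → Ω → ℝ}
    (hmsum : ∀ z, ∑ w, m z w = 1) : ∑ z, ∑ w, η0 z * m z w = 1 := by
  simp only [← Finset.mul_sum, hmsum, mul_one, hsum]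

end

theorem le_ite_add_ite_add_ite {P Q R : Prop} [Decidable P] [Decidable Q] [Decidable R]
    {x : ℝ} (hx : 0 ≤ x) (h : P ∨ Q ∨ R) :
    x ≤ (if P then x else 0) + (if Q then x else 0) + (if R then x else 0) := by
  rcases h with h | h | h <;> simp only [h, if_true] <;> split_ifs <;> linarith

theorem stochastic_conditional_as_if_valid_general {A : Type*} {Ω : Type*}
    [Fintype A] [Fintype Ω]
    (η0 : A → ℝ) (hη0 : ∀ z, 0 ≤ η0 z) (hsum : ∑ z, η0 z = 1)
    (m : A → Ω → ℝ) (hm : ∀ z w, 0 ≤ m z w) (hmsum : ∀ z, ∑ w, m z w = 1)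
    (tauhat : A → ℝ) (τ : ℝ) (α : ℝ)
    (U L : Ω → ℝ)
    (hU : ∀ w : Ω, 0 < (∑ z, η0 z * m z w) →
      (∑ z, if tauhat z - τ > U w then stochCondDesign η0 m w z else 0) ≤ α)
    (hL : ∀ w : Ω, 0 < (∑ z, η0 z * m z w) →
      (∑ z, if tauhat z - τ < L w then stochCondDesign η0 m w z else 0) ≤ α) :
    1 - 2 * α ≤
      ∑ z, ∑ w, if tauhat z - U w ≤ τ ∧ τ ≤ tauhat z - L w
        then η0 z * m z w else 0 := by
  have hq : ∀ z w, 0 ≤ η0 z * m z w := fun z w => mul_nonneg (hη0 z) (hm z w)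
  have htotal := sum_sum_mul_eq_one hsum hmsum
  have hUjoint := sum_sum_ite_le_mul_of_conditional_le hq _ hU
  have hLjoint := sum_sum_ite_le_mul_of_conditional_le hq _ hL
  have hcases : ∀ z w, (tauhat z - U w ≤ τ ∧ τ ≤ tauhat z - L w)
      ∨ tauhat z - τ > U w ∨ tauhat z - τ < L w := by
    intro z w
    by_contra! h
    exact absurd (h.1 (by linarith [h.2.1])) (by linarith [h.2.2])
  have hunion := Finset.sum_le_sum fun z (_ : z ∈ Finset.univ) => Finset.sum_le_sum
    fun w (_ : w ∈ Finset.univ) => le_ite_add_ite_add_ite (hq z w) (hcases z w)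
  simp only [Finset.sum_add_distrib] at hunion
  rw [htotal] at hUjoint hLjoint hunion
  linarith

/-- Paper's Theorem 2: the stochastic oracle procedure built with a stochastic
conditional design map is `η0`-valid (jointly over the assignment and the
auxiliary randomness `w`). -/
theorem stochastic_conditional_as_if_valid {A : Type*} {Ω : Type*}
    [Fintype A] [Fintype Ω]
    (η0 : A → ℝ) (hη0 : ∀ z, 0 ≤ η0 z) (hsum : ∑ z, η0 z = 1)
    (m : A → Ω → ℝ) (hm : ∀ z w, 0 ≤ m z w) (hmsum : ∀ z, ∑ w, m z w = 1)
    (tauhat : A → ℝ) (τ : ℝ) (α : ℝ) (hα0 : 0 < α) (hα1 : α < 1 / 2)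
    (U L : Ω → ℝ)
    (hU : ∀ w : Ω, 0 < (∑ z, η0 z * m z w) →
      (∑ z, if tauhat z - τ > U w then stochCondDesign η0 m w z else 0) ≤ α)
    (hL : ∀ w : Ω, 0 < (∑ z, η0 z * m z w) →
      (∑ z, if tauhat z - τ < L w then stochCondDesign η0 m w z else 0) ≤ α) :
    1 - 2 * α ≤
      ∑ z, ∑ w, if tauhat z - U w ≤ τ ∧ τ ≤ tauhat z - L w
        then η0 z * m z w else 0 :=
  stochastic_conditional_as_if_valid_general η0 hη0 hsum m hm hmsum tauhat τ α U L hU hL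
end

section
/- Let A be a finite type, η a design on A, C : A → Set ℝ a confidence procedure, τ ∈ ℝ, and β ∈ [0,1]. Let A⁺, A⁻ ⊆ A be disjoint events with P_η(A⁺) > 0 and P_η(A⁻) > 0, and set β⁺ = P_η({z : τ ∈ C(z)} | A⁺) and β⁻ = P_η({z : τ ∈ C(z)} | A⁻). Then the expected return of the strategy S(A⁺, A⁻) equals (β⁺ − β)·P_η(A⁺) + (β − β⁻)·P_η(A⁻). -/
open scoped Classical

/-- The return, to the bettor, of the strategy `S(A⁺, A⁻)` at assignment `z`:
bet on coverage when `z ∈ A⁺`, against coverage when `z ∈ A⁻`, no bet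
otherwise. -/
noncomputable def betReturn {A : Type*} (C : A → Set ℝ) (τ : ℝ) (β : ℝ)
    (Aplus Aminus : Set A) (z : A) : ℝ :=
  if z ∈ Aplus then (if τ ∈ C z then 1 - β else -β)
  else if z ∈ Aminus then (if τ ∉ C z then β else -(1 - β))
  else 0

/-- Expected-return identity: for disjoint events `A⁺`, `A⁻` of positive
probability, the expected return of `S(A⁺, A⁻)` equals
`(β⁺ − β)·P(A⁺) + (β − β⁻)·P(A⁻)` where `β⁺`, `β⁻` are the conditional
coverage probabilities given `A⁺` and `A⁻`. -/
theorem betting_expected_return_identity {A : Type*} [Fintype A]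
    (η : A → ℝ) (hη : ∀ z, 0 ≤ η z) (hsum : ∑ z, η z = 1)
    (C : A → Set ℝ) (τ : ℝ) (β : ℝ) (hβ0 : 0 ≤ β) (hβ1 : β ≤ 1)
    (Aplus Aminus : Set A) (hdisj : Disjoint Aplus Aminus)
    (hplus : 0 < (∑ z, if z ∈ Aplus then η z else 0))
    (hminus : 0 < (∑ z, if z ∈ Aminus then η z else 0)) :
    (∑ z, η z * betReturn C τ β Aplus Aminus z) =
      ((∑ z, if τ ∈ C z ∧ z ∈ Aplus then η z else 0) /
          (∑ z, if z ∈ Aplus then η z else 0) - β) *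
        (∑ z, if z ∈ Aplus then η z else 0) +
      (β - (∑ z, if τ ∈ C z ∧ z ∈ Aminus then η z else 0) /
          (∑ z, if z ∈ Aminus then η z else 0)) *
        (∑ z, if z ∈ Aminus then η z else 0) := by
  have hP : (∑ z, if z ∈ Aplus then η z else 0) ≠ 0 := ne_of_gt hplus
  have hM : (∑ z, if z ∈ Aminus then η z else 0) ≠ 0 := ne_of_gt hminus
  have key : (∑ z, η z * betReturn C τ β Aplus Aminus z) =
      (∑ z, if τ ∈ C z ∧ z ∈ Aplus then η z else 0)
      - β * (∑ z, if z ∈ Aplus then η z else 0)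
      + (β * (∑ z, if z ∈ Aminus then η z else 0)
      - (∑ z, if τ ∈ C z ∧ z ∈ Aminus then η z else 0)) := by
    rw [Finset.mul_sum, Finset.mul_sum, ← Finset.sum_sub_distrib,
      ← Finset.sum_sub_distrib, ← Finset.sum_add_distrib]
    apply Finset.sum_congr rfl
    intro z _
    unfold betReturn
    by_cases hp : z ∈ Aplus
    · have hm : z ∉ Aminus := fun hm => (hdisj.le_bot ⟨hp, hm⟩)
      by_cases hc : τ ∈ C z <;> simp [hp, hm, hc] <;> ring
    · by_cases hm : z ∈ Aminus
      · by_cases hc : τ ∈ C z <;> simp [hp, hm, hc] <;> ring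
      · by_cases hc : τ ∈ C z <;> simp [hp, hm, hc]
  rw [key, sub_mul, sub_mul, div_mul_cancel₀ _ hP, div_mul_cancel₀ _ hM]
end

section
/- Let A be a finite type, η a design on A, C : A → Set ℝ a confidence procedure, τ ∈ ℝ, β ∈ [0,1], and let B ⊆ A be an event with P_η(B) > 0. Then the following are equivalent: (1) the expected return of strategy S(B, ∅) is zero; (2) the expected return of strategy S(∅, B) is zero; (3) P_η({z : τ ∈ C(z)} | B) = β. In other words, the set B is not relevant for the pair (C, β) if and only if the procedure is valid conditionally on B. (Paper's Proposition linking relevance and conditional validity.) -/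
open scoped Classical

/-- Relevance and conditional validity: for an event `B` of positive
probability, the strategy `S(B, ∅)` has zero expected return iff `S(∅, B)`
does, iff the procedure is valid conditionally on `B`. -/
theorem not_relevant_iff_conditionally_valid {A : Type*} [Fintype A]
    (η : A → ℝ) (hη : ∀ z, 0 ≤ η z) (hsum : ∑ z, η z = 1)
    (C : A → Set ℝ) (τ : ℝ) (β : ℝ) (hβ0 : 0 ≤ β) (hβ1 : β ≤ 1)
    (B : Set A) (hB : 0 < (∑ z, if z ∈ B then η z else 0)) :
    ((∑ z, η z * betReturn C τ β B ∅ z) = 0 ↔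
      (∑ z, η z * betReturn C τ β ∅ B z) = 0) ∧
    ((∑ z, η z * betReturn C τ β B ∅ z) = 0 ↔
      (∑ z, if τ ∈ C z ∧ z ∈ B then η z else 0) /
        (∑ z, if z ∈ B then η z else 0) = β) := by
  set P : ℝ := ∑ z, if z ∈ B then η z else 0 with hP
  set Q : ℝ := ∑ z, if τ ∈ C z ∧ z ∈ B then η z else 0 with hQ
  have h1 : (∑ z, η z * betReturn C τ β B ∅ z) = Q - β * P := by
    rw [hQ, hP, Finset.mul_sum, ← Finset.sum_sub_distrib]
    apply Finset.sum_congr rfl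
    intro z _
    by_cases hz : z ∈ B <;> by_cases hc : τ ∈ C z <;>
      simp [betReturn, hz, hc] <;> ring
  have h2 : (∑ z, η z * betReturn C τ β ∅ B z) = -(Q - β * P) := by
    rw [hQ, hP, neg_sub, Finset.mul_sum, ← Finset.sum_sub_distrib]
    apply Finset.sum_congr rfl
    intro z _
    by_cases hz : z ∈ B <;> by_cases hc : τ ∈ C z <;>
      simp [betReturn, hz, hc] <;> ring
  rw [h1, h2]
  constructor
  · rw [neg_eq_zero]
  · rw [div_eq_iff (ne_of_gt hB), sub_eq_zero, mul_comm]
end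

section
/- Let A be a finite type of assignments, η0 a design on A, and Δ : A → ℝ (the covariate imbalance, which, when all potential outcomes equal the covariates, equals the difference-in-means estimator with true effect τ = 0). For each z ∈ A, let S(z) = {z' ∈ A : |Δ(z')| < |Δ(z)|} be the set of assignments with strictly better balance. Suppose that for every z in the support of η0: S(z) is nonempty, and the oracle interval endpoints satisfy min_{z'∈S(z)} Δ(z') ≤ L(z) ≤ U(z) ≤ max_{z'∈S(z)} Δ(z'). Then P_{η0}({z : Δ(z) − U(z) ≤ 0 and 0 ≤ Δ(z) − L(z)}) = 0; i.e., the as-if rerandomized procedure that conditions on balance strictly better than the observed balance has coverage zero. (Paper's appendix result on zero coverage for the strict rerandomized as-if design.) -/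
open scoped Classical

/-! Coverage at `z` forces `L z ≤ Δ z ≤ U z`, so `Δ z` lies between two imbalances `Δ z₁ ≤ L z` and
`U z ≤ Δ z₂` taken from `S(z)`. A point between two reals has absolute value at most the larger of
theirs, which contradicts `|Δ z₁|, |Δ z₂| < |Δ z|`. Hence no assignment of positive weight is
covered. -/

lemma not_between_of_abs_lt_abs {α : Type*} [AddCommGroup α] [LinearOrder α] [IsOrderedAddMonoid α]
    {a x b : α} (ha : |a| < |x|) (hb : |b| < |x|) : ¬(a ≤ x ∧ x ≤ b) := fun ⟨hax, hxb⟩ =>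
  (abs_le_max_abs_abs hax hxb).not_gt (max_lt ha hb)

theorem strict_rerandomization_zero_coverage_general {A : Type*} [Fintype A]
    (η0 : A → ℝ) (hη0 : ∀ z, 0 ≤ η0 z)
    (Δ : A → ℝ) (L U : A → ℝ)
    (hmin : ∀ z, 0 < η0 z → ∃ z', |Δ z'| < |Δ z| ∧ Δ z' ≤ L z)
    (hmax : ∀ z, 0 < η0 z → ∃ z', |Δ z'| < |Δ z| ∧ U z ≤ Δ z') :
    (∑ z, if Δ z - U z ≤ 0 ∧ 0 ≤ Δ z - L z then η0 z else 0) = 0 := by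
  refine Finset.sum_eq_zero fun z _ => ?_
  split_ifs with hcover
  · obtain hzero | hpos := (hη0 z).eq_or_lt
    · exact hzero.symm
    obtain ⟨z₁, hbal₁, hz₁⟩ := hmin z hpos
    obtain ⟨z₂, hbal₂, hz₂⟩ := hmax z hpos
    exact absurd ⟨by linarith, by linarith⟩ (not_between_of_abs_lt_abs hbal₁ hbal₂)
  · rfl

/-- Zero coverage of the strict rerandomized as-if design: if for every
assignment `z` in the support of `η0` the oracle interval endpoints `L z ≤ U z`
lie between the minimum and maximum of the imbalance values over
`S(z) = {z' : |Δ z'| < |Δ z|}` (with `S(z)` nonempty), then the procedure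
covers `τ = 0` with probability zero. -/
theorem strict_rerandomization_zero_coverage {A : Type*} [Fintype A]
    (η0 : A → ℝ) (hη0 : ∀ z, 0 ≤ η0 z) (hsum : ∑ z, η0 z = 1)
    (Δ : A → ℝ) (L U : A → ℝ)
    (hLU : ∀ z, 0 < η0 z → L z ≤ U z)
    (hmin : ∀ z, 0 < η0 z → ∃ z', |Δ z'| < |Δ z| ∧ Δ z' ≤ L z)
    (hmax : ∀ z, 0 < η0 z → ∃ z', |Δ z'| < |Δ z| ∧ U z ≤ Δ z') :
    (∑ z, if Δ z - U z ≤ 0 ∧ 0 ≤ Δ z - L z then η0 z else 0) = 0 :=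
  strict_rerandomization_zero_coverage_general η0 hη0 Δ L U hmin hmax
end
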